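/- The generating function of the sequence c_n = ∑_{d=0}^n (1/(d+1))(n choose d)(2d choose d) satisfies (∑ c_n x^n)·(1 - x + r(x)) = 2, where r(x) is the unique formal power series with r(0)=1 and r(x)² = 1-6x+5x². -/

import Mathlib

/-!
Since `(2d choose d)/(d+1)` is the Catalan number `C_d`, `c_n = ∑_d (n choose d) C_d` is the binomial
transform of the Catalan numbers, so `∑ c_n x^n = (1-x)⁻¹ C(x/(1-x))` with `C` the Catalan series
(here `(1-x)⁻¹` is `mk 1`). Substitution is a ring homomorphism, so `C = 1 + x C²` becomes
`(1-x) B = 1 + x(1-x) B²` for `B = ∑ c_n x^n`. Completing the square with `r² = 1-6x+5x²` gives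
`(B(1-x+r) - 2)(B(1-x-r) - 2) = 0`; the second factor has constant coefficient `-2`, and
`ℚ⟦X⟧` is a domain.
-/

open PowerSeries Finset

namespace PowerSeries

variable {R : Type*} [CommRing R]

theorem X_pow_dvd_subst_sub_aeval_trunc {b : R⟦X⟧} (hb : constantCoeff b = 0) (f : R⟦X⟧) (n : ℕ) :
    X ^ n ∣ subst b f - Polynomial.aeval b (trunc n f) := by
  have hsub : HasSubst b := HasSubst.of_constantCoeff_zero' hb
  obtain ⟨h, hh⟩ : X ^ n ∣ f - (trunc n f : R⟦X⟧) := by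
    rw [X_pow_dvd_iff]
    intro m hm
    simp [coeff_trunc, hm]
  rw [← subst_coe hsub, ← subst_sub hsub, hh, subst_mul hsub, subst_pow hsub, subst_X hsub]
  exact (pow_dvd_pow_of_dvd (X_dvd_iff.mpr hb) n).mul_right _

theorem coeff_mul_subst {b : R⟦X⟧} (hb : constantCoeff b = 0) (g f : R⟦X⟧) (n : ℕ) :
    coeff n (g * subst b f) = ∑ d ∈ range (n + 1), coeff d f * coeff n (g * b ^ d) := by
  have htrunc : coeff n (g * subst b f) = coeff n (g * Polynomial.aeval b (trunc (n + 1) f)) := by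
    obtain ⟨h, hh⟩ := X_pow_dvd_subst_sub_aeval_trunc hb f (n + 1)
    rw [← sub_eq_zero, ← map_sub, ← mul_sub, hh, mul_left_comm, coeff_X_pow_mul', if_neg (by omega)]
  rw [htrunc, Polynomial.aeval_eq_sum_range' (natDegree_trunc_lt f n), mul_sum, map_sum]
  refine sum_congr rfl fun d hd => ?_
  rw [coeff_trunc, if_pos (mem_range.mp hd), mul_smul_comm, coeff_smul, smul_eq_mul]

theorem coeff_mk_one_mul_subst (f : R⟦X⟧) (n : ℕ) :
    coeff n (mk 1 * subst (X * mk 1) f) = ∑ d ∈ range (n + 1), n.choose d * coeff d f := by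
  rw [coeff_mul_subst (by simp)]
  refine sum_congr rfl fun d hd => ?_
  have hd : d ≤ n := Nat.lt_succ_iff.mp (mem_range.mp hd)
  rw [show (mk 1 : R⟦X⟧) * (X * mk 1) ^ d = X ^ d * mk 1 ^ (d + 1) by ring,
    mk_one_pow_eq_mk_choose_add, coeff_X_pow_mul', if_pos hd, coeff_mk, Nat.add_sub_cancel' hd,
    mul_comm]

theorem mul_one_sub_X_add_eq_two [IsDomain R] [NeZero (2 : R)] {B r : R⟦X⟧}
    (hr0 : constantCoeff r = 1) (hr : r ^ 2 = 1 - 6 * X + 5 * X ^ 2)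
    (hB : (1 - X) * B - X * (1 - X) * B ^ 2 = 1) :
    B * (1 - X + r) = 2 := by
  have hfac : (B * (1 - X + r) - 2) * (B * (1 - X - r) - 2) = 0 := by
    linear_combination (-B ^ 2) * hr - 4 * hB
  refine sub_eq_zero.mp ((mul_eq_zero.mp hfac).resolve_right fun h => ?_)
  have h2 := congrArg constantCoeff h
  simp only [map_sub, map_mul, map_one, map_ofNat, map_zero, constantCoeff_X, hr0, sub_zero,
    mul_zero, sub_self, zero_sub, neg_eq_zero] at h2
  exact two_ne_zero h2

variable (R) in
noncomputable def binomialCatalanSeries : R⟦X⟧ :=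
  mk fun n => ∑ d ∈ range (n + 1), (n.choose d * catalan d : R)

variable (R) in
theorem binomialCatalanSeries_eq_mk_one_mul_subst :
    binomialCatalanSeries R = mk 1 * subst (X * mk 1) (map (Nat.castRingHom R) catalanSeries) := by
  ext n
  simp [binomialCatalanSeries, coeff_mk_one_mul_subst]

variable (R) in
theorem one_sub_X_mul_binomialCatalanSeries_sub :
    (1 - X) * binomialCatalanSeries R - X * (1 - X) * binomialCatalanSeries R ^ 2 = 1 := by
  have hsub : HasSubst (X * mk 1 : R⟦X⟧) := HasSubst.of_constantCoeff_zero' (by simp)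
  set S : R⟦X⟧ := subst (X * mk 1 : R⟦X⟧) (map (Nat.castRingHom R) catalanSeries)
  have hS : S = 1 + X * mk 1 * S ^ 2 := by
    have hcat := congrArg (substAlgHom hsub)
      (congrArg (map (Nat.castRingHom R)) catalanSeries_sq_mul_X_add_one)
    simp only [map_add, map_mul, map_pow, map_X, map_one, substAlgHom_X, coe_substAlgHom] at hcat
    linear_combination -hcat
  rw [binomialCatalanSeries_eq_mk_one_mul_subst]
  linear_combination hS + (S - X * mk 1 * S ^ 2) * mk_one_mul_one_sub_eq_one R

end PowerSeries

theorem a007317_gf (r : PowerSeries ℚ)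
    (h0 : PowerSeries.constantCoeff (R := ℚ) r = 1)
    (hr : r ^ 2 = 1 - 6 * PowerSeries.X + 5 * PowerSeries.X ^ 2) :
    (PowerSeries.mk fun n =>
        ∑ d ∈ Finset.range (n + 1),
          (1 / (d + 1 : ℚ)) * (n.choose d : ℚ) * ((2 * d).choose d : ℚ)) *
      (1 - PowerSeries.X + r) = 2 := by
  have hB : (PowerSeries.mk fun n =>
        ∑ d ∈ Finset.range (n + 1),
          (1 / (d + 1 : ℚ)) * (n.choose d : ℚ) * ((2 * d).choose d : ℚ)) =
      binomialCatalanSeries ℚ := by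
    ext n
    simp only [binomialCatalanSeries, coeff_mk]
    refine sum_congr rfl fun d _ => ?_
    rw [← Nat.centralBinom_eq_two_mul_choose, ← succ_mul_catalan_eq_centralBinom]
    push_cast
    field_simp
  rw [hB]
  exact mul_one_sub_X_add_eq_two h0 hr (one_sub_X_mul_binomialCatalanSeries_sub ℚ)
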